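/- arXiv:1510.04865 — 2 statements merged into one kernel-verified Lean document; each statement's English description precedes it below -/
import Mathlib

section
/- Let s = 2, and for 0 < w < v define K₃(v,w) = {(x,y) ∈ ℝ² : 0 ≤ x ≤ v and (w/v)x ≤ y ≤ x}. If (α, β) is a solution of the system on an interval J with β(t) > 0 for all t ∈ J, and l ∈ J satisfies 0 < β(l) ≤ α(l), then for every t ∈ J with t ≥ l one has (α(t), β(t)) ∈ K₃(α(l), β(l)); that is, 0 ≤ α(t) ≤ α(l) and (β(l)/α(l))·α(t) ≤ β(t) ≤ α(t). -/
open Real Filter Set Topology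
open scoped ENNReal

/-- The vector field of the spinor-flow ODE system on Berger spheres,
with parameter `s = aλ ∈ {2, -2}`. -/
noncomputable def F (s x y : ℝ) : ℝ × ℝ :=
  (-(9/32) * x^3 / y^4 + (s/4) * x^2 / y^3 - (1/4) * x / y^2,
   (3/32) * x^2 / y^3 - (s/16) * x / y^2)

/-- `(α, β)` is a solution of the system on the set `J`, with `β` never zero. -/
def IsSolutionOn (s : ℝ) (α β : ℝ → ℝ) (J : Set ℝ) : Prop :=
  ∀ t ∈ J, β t ≠ 0 ∧
    HasDerivAt α (F s (α t) (β t)).1 t ∧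
    HasDerivAt β (F s (α t) (β t)).2 t

/-!
For `s = 2` the first equation reads `α' = -α (9α² - 16αβ + 8β²) / (32β⁴)` with a positive
definite quadratic factor, so `α` decreases as long as it is nonnegative. The ratio `u = α / β`
satisfies `u' = -α (3α - 2β) / (8β⁴) · (u - 1)`: thus `u - 1` solves a linear equation and keeps
the sign it has at `l`, i.e. `β ≤ α` persists (whence `α ≥ β > 0`), and then `u' ≤ 0`, so
`u t ≤ u l`, which is the bound `(β l / α l) α t ≤ β t`.
-/

theorem exists_eq_exp_mul_of_hasDerivAt_mul {f c : ℝ → ℝ} {a b : ℝ} (hab : a ≤ b)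
    (hc : ContinuousOn c (Icc a b)) (hf : ∀ x ∈ Icc a b, HasDerivAt f (c x * f x) x) :
    ∃ E, f b = exp E * f a := by
  set c' : ℝ → ℝ := IccExtend hab ((Icc a b).domRestrict c)
  have hc' : Continuous c' := hc.domRestrict.Icc_extend'
  have hcc' : ∀ x ∈ Icc a b, c' x = c x := fun x hx => IccExtend_of_mem hab _ hx
  set C : ℝ → ℝ := fun x => ∫ y in a..x, c' y
  have hC : ∀ x, HasDerivAt C (c' x) x := fun x =>
    (hc'.integral_hasStrictDerivAt a x).hasDerivAt
  set g : ℝ → ℝ := fun x => exp (-C x) * f x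
  have hg : ∀ x ∈ Icc a b, HasDerivAt g 0 x := by
    intro x hx
    have h := ((hC x).neg.exp).mul (hf x hx)
    rw [hcc' x hx] at h
    exact h.congr_deriv (by ring)
  have hgab : g b = g a :=
    constant_of_has_deriv_right_zero (fun x hx => (hg x hx).continuousAt.continuousWithinAt)
      (fun x hx => (hg x (Ico_subset_Icc_self hx)).hasDerivWithinAt) b ⟨hab, le_rfl⟩
  refine ⟨C b, ?_⟩
  simp only [g, C, intervalIntegral.integral_same, neg_zero, exp_zero, one_mul] at hgab
  rw [← hgab, ← mul_assoc, ← exp_add, add_neg_cancel, exp_zero, one_mul]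

theorem antitoneOn_of_hasDerivAt_nonpos {D : Set ℝ} (hD : Convex ℝ D) {f f' : ℝ → ℝ}
    (hf : ∀ x ∈ D, HasDerivAt f (f' x) x) (hf' : ∀ x ∈ D, f' x ≤ 0) : AntitoneOn f D :=
  antitoneOn_of_hasDerivWithinAt_nonpos hD
    (fun x hx => (hf x hx).continuousAt.continuousWithinAt)
    (fun x hx => (hf x (interior_subset hx)).hasDerivWithinAt)
    (fun x hx => hf' x (interior_subset hx))

theorem F_two_fst_nonpos {x : ℝ} (hx : 0 ≤ x) (y : ℝ) : (F 2 x y).1 ≤ 0 := by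
  rcases eq_or_ne y 0 with rfl | hy
  · simp [F]
  have h : (F 2 x y).1 = -(x * (9 * x ^ 2 - 16 * x * y + 8 * y ^ 2)) / (32 * y ^ 4) := by
    simp only [F]
    field_simp
    ring
  rw [h]
  -- `9 (9x² - 16xy + 8y²) = (9x - 8y)² + 8y²`
  have hq : 0 ≤ 9 * x ^ 2 - 16 * x * y + 8 * y ^ 2 := by nlinarith [sq_nonneg (9 * x - 8 * y)]
  exact div_nonpos_of_nonpos_of_nonneg (neg_nonpos.2 (mul_nonneg hx hq)) (by positivity)

namespace IsSolutionOn

variable {s : ℝ} {α β : ℝ → ℝ} {J : Set ℝ}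

theorem mono {J' : Set ℝ} (h : IsSolutionOn s α β J) (hJ' : J' ⊆ J) : IsSolutionOn s α β J' :=
  fun t ht => h t (hJ' ht)

theorem continuousOn (h : IsSolutionOn s α β J) : ContinuousOn α J ∧ ContinuousOn β J :=
  ⟨fun t ht => (h t ht).2.1.continuousAt.continuousWithinAt,
    fun t ht => (h t ht).2.2.continuousAt.continuousWithinAt⟩

theorem hasDerivAt_div (h : IsSolutionOn 2 α β J) {t : ℝ} (ht : t ∈ J) :
    HasDerivAt (fun r => α r / β r)
      (-(α t * (3 * α t - 2 * β t)) / (8 * β t ^ 4) * (α t / β t - 1)) t := by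
  obtain ⟨hβ, hα', hβ'⟩ := h t ht
  refine (hα'.div hβ' hβ).congr_deriv ?_
  simp only [F]
  field_simp
  ring

theorem snd_le_fst_of_le (h : IsSolutionOn 2 α β J) (hJ : J.OrdConnected)
    (hβ : ∀ t ∈ J, 0 < β t) {l : ℝ} (hl : l ∈ J) (hβα : β l ≤ α l) :
    ∀ t ∈ J, l ≤ t → β t ≤ α t := by
  intro t ht hlt
  have hsub : Icc l t ⊆ J := hJ.out hl ht
  have hc : ContinuousOn (fun r => -(α r * (3 * α r - 2 * β r)) / (8 * β r ^ 4)) (Icc l t) := by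
    obtain ⟨hαc, hβc⟩ := (h.mono hsub).continuousOn
    refine ContinuousOn.div (by fun_prop) (by fun_prop) fun r hr => ?_
    have := (hβ r (hsub hr)).ne'
    positivity
  obtain ⟨E, hE⟩ := exists_eq_exp_mul_of_hasDerivAt_mul (f := fun r => α r / β r - 1) hlt hc
    fun r hr => (h.hasDerivAt_div (hsub hr)).sub_const 1
  have hl' : 0 ≤ α l / β l - 1 := by rw [sub_nonneg, one_le_div (hβ l hl)]; exact hβα
  have ht' : 0 ≤ α t / β t - 1 := hE ▸ mul_nonneg (exp_pos E).le hl'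
  rwa [sub_nonneg, one_le_div (hβ t ht)] at ht'

theorem antitoneOn_fst (h : IsSolutionOn 2 α β J) (hJ : J.OrdConnected)
    (hα : ∀ t ∈ J, 0 ≤ α t) : AntitoneOn α J :=
  antitoneOn_of_hasDerivAt_nonpos hJ.convex (fun t ht => (h t ht).2.1)
    fun t ht => F_two_fst_nonpos (hα t ht) _

theorem antitoneOn_div (h : IsSolutionOn 2 α β J) (hJ : J.OrdConnected)
    (hβα : ∀ t ∈ J, 0 < β t ∧ β t ≤ α t) : AntitoneOn (fun r => α r / β r) J := by
  refine antitoneOn_of_hasDerivAt_nonpos hJ.convex (fun t ht => h.hasDerivAt_div ht) ?_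
  intro t ht
  obtain ⟨hβ, hle⟩ := hβα t ht
  have hcoeff : -(α t * (3 * α t - 2 * β t)) / (8 * β t ^ 4) ≤ 0 :=
    div_nonpos_of_nonpos_of_nonneg (by nlinarith) (by positivity)
  have hratio : 0 ≤ α t / β t - 1 := by rw [sub_nonneg, one_le_div hβ]; exact hle
  exact mul_nonpos_of_nonpos_of_nonneg hcoeff hratio

end IsSolutionOn

theorem trapped_in_K3_general (J : Set ℝ) (hJ : J.OrdConnected) (α β : ℝ → ℝ)
    (hsol : IsSolutionOn 2 α β J) (hβ : ∀ t ∈ J, 0 < β t)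
    (l : ℝ) (hl : l ∈ J) (hβα : β l ≤ α l) :
    ∀ t ∈ J, l ≤ t →
      0 ≤ α t ∧ α t ≤ α l ∧ (β l / α l) * α t ≤ β t ∧ β t ≤ α t := by
  set D := J ∩ Ici l
  have hD : D.OrdConnected := hJ.inter ordConnected_Ici
  have hlD : l ∈ D := ⟨hl, le_refl l⟩
  have hsolD : IsSolutionOn 2 α β D := hsol.mono inter_subset_left
  have hβleα : ∀ t ∈ D, 0 < β t ∧ β t ≤ α t := fun t ht =>
    ⟨hβ t ht.1, hsol.snd_le_fst_of_le hJ hβ hl hβα t ht.1 ht.2⟩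
  have hαpos : ∀ t ∈ D, 0 < α t := fun t ht => (hβleα t ht).1.trans_le (hβleα t ht).2
  intro t ht hlt
  have htD : t ∈ D := ⟨ht, hlt⟩
  have hdiv : α t / β t ≤ α l / β l := hsolD.antitoneOn_div hD hβleα hlD htD hlt
  refine ⟨(hαpos t htD).le, hsolD.antitoneOn_fst hD (fun r hr => (hαpos r hr).le) hlD htD hlt,
    ?_, (hβleα t htD).2⟩
  rw [div_le_div_iff₀ (hβ t ht) (hβ l hl)] at hdiv
  rw [div_mul_eq_mul_div, div_le_iff₀ (hαpos l hlD)]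
  linarith

/-- For `s = 2`, the sets `K₃(v,w)` (for `0 < w < v`, here with `w ≤ v`) trap the
solutions: if `0 < β(l) ≤ α(l)`, the solution stays in `K₃(α(l), β(l))` afterwards. -/
theorem trapped_in_K3 (J : Set ℝ) (hJ : J.OrdConnected) (α β : ℝ → ℝ)
    (hsol : IsSolutionOn 2 α β J) (hβ : ∀ t ∈ J, 0 < β t)
    (l : ℝ) (hl : l ∈ J) (hβl : 0 < β l) (hβα : β l ≤ α l) :
    ∀ t ∈ J, l ≤ t →
      0 ≤ α t ∧ α t ≤ α l ∧ (β l / α l) * α t ≤ β t ∧ β t ≤ α t :=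
  trapped_in_K3_general J hJ α β hsol hβ l hl hβα
end

section
/- Let s = 2. The functions α(t) = (1/9)·√(36 − 3t) and β(t) = (1/6)·√(36 − 3t), defined for t ∈ [0, 12), form a solution of the system with α(0) = 2/3 and β(0) = 1; along this solution α(t) = (2/3)·β(t) for all t, and α(t) → 0, β(t) → 0 as t → 12. In particular, the maximal time of existence of the solution with initial value (2/3, 1) is t_max = 12. -/
/-! On the ray `α = (2/3) β` the vector field for `s = 2` is tangent to the ray and reduces to
`β' = -1 / (24 β)`, so `β² = 1 - t / 12` and `β = (1/6)√(36 - 3t)` reaches `0` at `t = 12`.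
A solution extending past `12` would have `β(12) = 0` by continuity, which the system forbids. -/

open Real Filter Set Topology
open scoped ENNReal

/-- The interval `[0, T)` as a subset of `ℝ`, where `T ∈ (0,∞]`. -/
def domainUpTo (T : ℝ≥0∞) : Set ℝ := {t : ℝ | 0 ≤ t ∧ ENNReal.ofReal t < T}

/-- `(α, β)` is a maximal solution on `[0, T)`: it is a solution there and cannot be
extended to a solution on a strictly larger interval to the right. -/
def IsMaxSolution (s : ℝ) (α β : ℝ → ℝ) (T : ℝ≥0∞) : Prop :=
  0 < T ∧ IsSolutionOn s α β (domainUpTo T) ∧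
    ¬ ∃ (T' : ℝ≥0∞) (α' β' : ℝ → ℝ), T < T' ∧ IsSolutionOn s α' β' (domainUpTo T') ∧
        ∀ t ∈ domainUpTo T, α' t = α t ∧ β' t = β t

/-- The explicit solution for `s = 2`, `ε = 2/3`: `α(t) = (1/9)√(36 - 3t)`. -/
noncomputable def αex (t : ℝ) : ℝ := (1/9) * Real.sqrt (36 - 3*t)

/-- The explicit solution for `s = 2`, `ε = 2/3`: `β(t) = (1/6)√(36 - 3t)`. -/
noncomputable def βex (t : ℝ) : ℝ := (1/6) * Real.sqrt (36 - 3*t)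

lemma domainUpTo_ofReal (T : ℝ) : domainUpTo (ENNReal.ofReal T) = Ico 0 T := by
  ext t
  simp only [domainUpTo, mem_ofPred_eq, mem_Ico, ENNReal.ofReal_lt_ofReal_iff']
  constructor
  · rintro ⟨ht0, htT, -⟩
    exact ⟨ht0, htT⟩
  · rintro ⟨ht0, htT⟩
    exact ⟨ht0, htT, ht0.trans_lt htT⟩

lemma IsSolutionOn.mono_s9 {s : ℝ} {α β : ℝ → ℝ} {J J' : Set ℝ} (h : IsSolutionOn s α β J)
    (hJ : J' ⊆ J) : IsSolutionOn s α β J' :=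
  fun t ht => h t (hJ ht)

theorem isMaxSolution_of_tendsto_zero {s T : ℝ} {α β : ℝ → ℝ} (hT : 0 < T)
    (hsol : IsSolutionOn s α β (Ico 0 T)) (hβ : Tendsto β (𝓝[<] T) (𝓝 0)) :
    IsMaxSolution s α β (ENNReal.ofReal T) := by
  refine ⟨ENNReal.ofReal_pos.mpr hT, (domainUpTo_ofReal T).symm ▸ hsol, ?_⟩
  rintro ⟨T', α', β', hTT', hsol', hagree⟩
  obtain ⟨hβ'T, -, hderiv⟩ := hsol' T ⟨hT.le, hTT'⟩
  have heq : β' =ᶠ[𝓝[<] T] β := by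
    filter_upwards [Ico_mem_nhdsLT hT] with t ht
    exact (hagree t ((domainUpTo_ofReal T).symm ▸ ht)).2
  have hlim : Tendsto β' (𝓝[<] T) (𝓝 (β' T)) :=
    hderiv.continuousAt.continuousWithinAt.tendsto
  exact hβ'T (tendsto_nhds_unique hlim (hβ.congr' heq.symm))

lemma F_two_two_thirds_mul (y : ℝ) :
    F 2 (2/3 * y) y = (-(1 / (36 * y)), -(1 / (24 * y))) := by
  rcases eq_or_ne y 0 with rfl | hy
  · simp [F]
  · simp only [F, Prod.mk.injEq]
    constructor <;> field_simp <;> ring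

lemma αex_eq_two_thirds_mul_βex (t : ℝ) : αex t = 2/3 * βex t := by
  simp only [αex, βex]
  ring

lemma βex_zero : βex 0 = 1 := by
  rw [βex, show (36 : ℝ) - 3 * 0 = 6 ^ 2 by norm_num, sqrt_sq (by norm_num)]
  norm_num

lemma βex_pos {t : ℝ} (ht : t < 12) : 0 < βex t := by
  unfold βex
  have : 0 < √(36 - 3 * t) := sqrt_pos.mpr (by linarith)
  positivity

lemma hasDerivAt_βex {t : ℝ} (ht : t < 12) : HasDerivAt βex (-(1 / (24 * βex t))) t := by
  have hlin : HasDerivAt (fun t : ℝ => 36 - 3 * t) (-3) t := by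
    simpa using ((hasDerivAt_id t).const_mul 3).const_sub 36
  have hsqrt : HasDerivAt βex (1/6 * (-3 / (2 * √(36 - 3 * t)))) t :=
    (hlin.sqrt (by linarith)).const_mul (1/6)
  refine hsqrt.congr_deriv ?_
  have : √(36 - 3 * t) ≠ 0 := (sqrt_pos.mpr (by linarith)).ne'
  simp only [βex]
  field_simp
  ring

lemma hasDerivAt_αex {t : ℝ} (ht : t < 12) : HasDerivAt αex (-(1 / (36 * βex t))) t := by
  have hderiv : HasDerivAt αex (2/3 * -(1 / (24 * βex t))) t := by
    rw [funext αex_eq_two_thirds_mul_βex]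
    exact (hasDerivAt_βex ht).const_mul (2/3)
  refine hderiv.congr_deriv ?_
  have := (βex_pos ht).ne'
  field_simp
  ring

theorem isSolutionOn_αex_βex : IsSolutionOn 2 αex βex (Iio 12) := by
  intro t ht
  rw [αex_eq_two_thirds_mul_βex, F_two_two_thirds_mul]
  exact ⟨(βex_pos ht).ne', hasDerivAt_αex ht, hasDerivAt_βex ht⟩

lemma tendsto_βex : Tendsto βex (𝓝[<] 12) (𝓝 0) := by
  have hcont : Continuous βex := by unfold βex; fun_prop
  have hβ12 : βex 12 = 0 := by norm_num [βex]
  exact hβ12 ▸ hcont.continuousWithinAt.tendsto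

/-- For `s = 2`, the functions `α(t) = (1/9)√(36 - 3t)`, `β(t) = (1/6)√(36 - 3t)`
form a solution on `[0, 12)` with `α(0) = 2/3`, `β(0) = 1`; along it `α = (2/3)β`,
both tend to `0` as `t → 12⁻`, and it is a maximal solution with `t_max = 12`. -/
theorem explicit_solution_eps_two_thirds :
    IsSolutionOn 2 αex βex (Set.Ico 0 12) ∧
    αex 0 = 2/3 ∧ βex 0 = 1 ∧
    (∀ t ∈ Set.Ico (0:ℝ) 12, αex t = (2/3) * βex t) ∧
    Tendsto αex (𝓝[<] 12) (𝓝 0) ∧ Tendsto βex (𝓝[<] 12) (𝓝 0) ∧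
    IsMaxSolution 2 αex βex (ENNReal.ofReal 12) := by
  have hsol : IsSolutionOn 2 αex βex (Ico 0 12) := isSolutionOn_αex_βex.mono_s9 Ico_subset_Iio_self
  have hα : Tendsto αex (𝓝[<] 12) (𝓝 0) := by
    simpa [funext αex_eq_two_thirds_mul_βex] using tendsto_βex.const_mul (2/3 : ℝ)
  refine ⟨hsol, ?_, βex_zero, fun t _ => αex_eq_two_thirds_mul_βex t, hα, tendsto_βex,
    isMaxSolution_of_tendsto_zero (by norm_num) hsol tendsto_βex⟩
  rw [αex_eq_two_thirds_mul_βex, βex_zero, mul_one]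
end
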